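/- The atoms of the tensor product A ⊗ B of two join-semilattices with zero are exactly the pure tensors a ⊗ b where a is an atom of A and b is an atom of B. -/

import Mathlib

/-! A bi-ideal `I ≠ ∇` contains a point `(a, b)` off `∇`, hence the pure tensor `a ⊗ b`; and for
`a, b ≠ 0` we have `a ⊗ b ⊆ c ⊗ d` iff `(a, b) ≤ (c, d)`. So a minimal `I` equals `a ⊗ b`, and
`a`, `b` are atoms because `c ⊗ b ⊂ a ⊗ b` whenever `c < a`. Conversely, a point off `∇` in a
bi-ideal `J ⊂ a ⊗ b` with `a`, `b` atoms must be `(a, b)` itself, forcing `a ⊗ b ⊆ J`. -/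

variable {A B : Type*} [SemilatticeSup A] [OrderBot A] [SemilatticeSup B] [OrderBot B]

/-- A bi-ideal of `A × B`: a downward closed subset containing
`∇ = (A × {0}) ∪ ({0} × B)` that is closed under lateral joins. -/
def IsBiIdeal (I : Set (A × B)) : Prop :=
  (∀ ⦃p q : A × B⦄, q ≤ p → p ∈ I → q ∈ I) ∧
  (∀ a : A, (a, (⊥ : B)) ∈ I) ∧
  (∀ b : B, ((⊥ : A), b) ∈ I) ∧
  (∀ a₀ a₁ : A, ∀ b : B, (a₀, b) ∈ I → (a₁, b) ∈ I → (a₀ ⊔ a₁, b) ∈ I) ∧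
  (∀ a : A, ∀ b₀ b₁ : B, (a, b₀) ∈ I → (a, b₁) ∈ I → (a, b₀ ⊔ b₁) ∈ I)

/-- `∇ = (A × {0}) ∪ ({0} × B)`, the least bi-ideal. -/
def nabla (A B : Type*) [SemilatticeSup A] [OrderBot A] [SemilatticeSup B] [OrderBot B] :
    Set (A × B) := {p | p.1 = ⊥ ∨ p.2 = ⊥}

/-- The pure tensor `a ⊗ b`. -/
def pureTensor (a : A) (b : B) : Set (A × B) :=
  nabla A B ∪ {p | p.1 ≤ a ∧ p.2 ≤ b}

/-- The bi-ideal generated by a subset `X` of `A × B`. -/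
def biGen (X : Set (A × B)) : Set (A × B) := ⋂₀ {K | IsBiIdeal K ∧ X ⊆ K}

/-- The join of two bi-ideals in the lattice of bi-ideals. -/
def biSup (I J : Set (A × B)) : Set (A × B) := biGen (I ∪ J)

/-- Elements of the tensor product `A ⊗ B`: the compact (finitely generated) bi-ideals. -/
def IsTensorElt (I : Set (A × B)) : Prop := ∃ S : Finset (A × B), I = biGen ↑S

variable {a c : A} {b d : B} {I J X : Set (A × B)}

theorem biGen_isBiIdeal (X : Set (A × B)) : IsBiIdeal (biGen X) :=
  ⟨fun _ _ hqp hp K hK => hK.1.1 hqp (hp K hK),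
    fun a _ hK => hK.1.2.1 a,
    fun b _ hK => hK.1.2.2.1 b,
    fun a₀ a₁ b h₀ h₁ K hK => hK.1.2.2.2.1 a₀ a₁ b (h₀ K hK) (h₁ K hK),
    fun a b₀ b₁ h₀ h₁ K hK => hK.1.2.2.2.2 a b₀ b₁ (h₀ K hK) (h₁ K hK)⟩

theorem biGen_subset (hI : IsBiIdeal I) (hXI : X ⊆ I) : biGen X ⊆ I :=
  fun _ hp => hp I ⟨hI, hXI⟩

theorem subset_biGen (X : Set (A × B)) : X ⊆ biGen X :=
  fun _ hp _ hK => hK.2 hp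

theorem IsTensorElt.isBiIdeal (hI : IsTensorElt I) : IsBiIdeal I := by
  obtain ⟨S, rfl⟩ := hI
  exact biGen_isBiIdeal _

theorem IsBiIdeal.nabla_subset (hI : IsBiIdeal I) : nabla A B ⊆ I := by
  rintro ⟨x, y⟩ (rfl | rfl : x = ⊥ ∨ y = ⊥)
  exacts [hI.2.2.1 y, hI.2.1 x]

theorem IsBiIdeal.exists_mem_of_ne_nabla (hI : IsBiIdeal I) (hne : I ≠ nabla A B) :
    ∃ x y, x ≠ ⊥ ∧ y ≠ ⊥ ∧ (x, y) ∈ I := by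
  obtain ⟨⟨x, y⟩, hxy, hn⟩ := Set.exists_of_ssubset (hI.nabla_subset.ssubset_of_ne hne.symm)
  simp only [nabla, Set.mem_ofPred_eq, not_or] at hn
  exact ⟨x, y, hn.1, hn.2, hxy⟩

theorem mem_pureTensor {p : A × B} :
    p ∈ pureTensor a b ↔ p.1 = ⊥ ∨ p.2 = ⊥ ∨ p.1 ≤ a ∧ p.2 ≤ b := by
  simp only [pureTensor, nabla, Set.mem_union, Set.mem_ofPred_eq, or_assoc]

theorem mem_pureTensor_of_ne_bot {x : A} {y : B} (hx : x ≠ ⊥) (hy : y ≠ ⊥) :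
    (x, y) ∈ pureTensor a b ↔ x ≤ a ∧ y ≤ b := by
  simp [mem_pureTensor, hx, hy]

theorem pureTensor_isBiIdeal (a : A) (b : B) : IsBiIdeal (pureTensor a b) := by
  refine ⟨?_, fun x => mem_pureTensor.2 (.inr (.inl rfl)),
    fun y => mem_pureTensor.2 (.inl rfl), ?_, ?_⟩
  · rintro ⟨x, y⟩ ⟨x', y'⟩ ⟨hx, hy⟩ h
    simp only [mem_pureTensor] at h ⊢
    rcases h with h | h | ⟨ha, hb⟩
    · exact .inl (le_bot_iff.1 (h ▸ hx))
    · exact .inr (.inl (le_bot_iff.1 (h ▸ hy)))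
    · exact .inr (.inr ⟨hx.trans ha, hy.trans hb⟩)
  · intro x₀ x₁ y h₀ h₁
    simp only [mem_pureTensor] at h₀ h₁ ⊢
    rcases h₀ with rfl | h₀ | h₀ <;> rcases h₁ with rfl | h₁ | h₁ <;> simp_all
  · intro x y₀ y₁ h₀ h₁
    simp only [mem_pureTensor] at h₀ h₁ ⊢
    rcases h₀ with h₀ | rfl | h₀ <;> rcases h₁ with h₁ | rfl | h₁ <;> simp_all

theorem mem_pureTensor_self : (a, b) ∈ pureTensor a b :=
  Or.inr ⟨le_rfl, le_rfl⟩

theorem IsBiIdeal.pureTensor_subset_iff (hI : IsBiIdeal I) :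
    pureTensor a b ⊆ I ↔ (a, b) ∈ I := by
  refine ⟨fun h => h mem_pureTensor_self, fun hab p hp => ?_⟩
  rcases hp with hp | hp
  · exact hI.nabla_subset hp
  · exact hI.1 hp hab

theorem pureTensor_isTensorElt (a : A) (b : B) : IsTensorElt (pureTensor a b) := by
  refine ⟨{(a, b)}, subset_antisymm ?_ ?_⟩
  · exact (biGen_isBiIdeal _).pureTensor_subset_iff.2 (subset_biGen _ (by simp))
  · exact biGen_subset (pureTensor_isBiIdeal a b) (by simpa using mem_pureTensor_self)

theorem pureTensor_subset_pureTensor_iff (ha : a ≠ ⊥) (hb : b ≠ ⊥) :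
    pureTensor a b ⊆ pureTensor c d ↔ a ≤ c ∧ b ≤ d := by
  rw [(pureTensor_isBiIdeal c d).pureTensor_subset_iff, mem_pureTensor_of_ne_bot ha hb]

theorem pureTensor_eq_nabla_iff : pureTensor a b = nabla A B ↔ a = ⊥ ∨ b = ⊥ := by
  refine ⟨fun h => (h ▸ mem_pureTensor_self : (a, b) ∈ nabla A B), fun h => ?_⟩
  refine Set.union_eq_left.2 fun p ⟨hx, hy⟩ => ?_
  rcases h with rfl | rfl
  exacts [.inl (le_bot_iff.1 hx), .inr (le_bot_iff.1 hy)]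

theorem pureTensor_mono (hac : a ≤ c) (hbd : b ≤ d) : pureTensor a b ⊆ pureTensor c d :=
  (pureTensor_isBiIdeal c d).pureTensor_subset_iff.2 (.inr ⟨hac, hbd⟩)

theorem pureTensor_ssubset_pureTensor (ha : a ≠ ⊥) (hb : b ≠ ⊥) (h : (c, d) < (a, b)) :
    pureTensor c d ⊂ pureTensor a b :=
  ⟨pureTensor_mono h.le.1 h.le.2,
    fun hsub => h.not_ge ((pureTensor_subset_pureTensor_iff ha hb).1 hsub)⟩

theorem IsBiIdeal.exists_eq_pureTensor_of_minimal (hI : IsBiIdeal I) (hne : I ≠ nabla A B)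
    (hmin : ∀ J, IsTensorElt J → J ⊂ I → J = nabla A B) :
    ∃ a b, IsAtom a ∧ IsAtom b ∧ I = pureTensor a b := by
  obtain ⟨a, b, ha, hb, hab⟩ := hI.exists_mem_of_ne_nabla hne
  have hI_eq : I = pureTensor a b := by
    by_contra h
    have hsub : pureTensor a b ⊂ I := (hI.pureTensor_subset_iff.2 hab).ssubset_of_ne (Ne.symm h)
    exact (pureTensor_eq_nabla_iff.1 (hmin _ (pureTensor_isTensorElt a b) hsub)).elim ha hb
  subst hI_eq
  have hlt : ∀ c d, (c, d) < (a, b) → c = ⊥ ∨ d = ⊥ := fun c d h =>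
    pureTensor_eq_nabla_iff.1
      (hmin _ (pureTensor_isTensorElt c d) (pureTensor_ssubset_pureTensor ha hb h))
  refine ⟨a, b, ⟨ha, fun c hc => ?_⟩, ⟨hb, fun d hd => ?_⟩, rfl⟩
  · exact (hlt c b (Prod.mk_lt_mk_iff_left.2 hc)).resolve_right hb
  · exact (hlt a d (Prod.mk_lt_mk_iff_right.2 hd)).resolve_left ha

theorem IsBiIdeal.eq_nabla_of_ssubset_pureTensor (hJ : IsBiIdeal J) (ha : IsAtom a)
    (hb : IsAtom b) (hJab : J ⊂ pureTensor a b) : J = nabla A B := by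
  by_contra hne
  obtain ⟨x, y, hx, hy, hxy⟩ := hJ.exists_mem_of_ne_nabla hne
  obtain ⟨hxa, hyb⟩ := (mem_pureTensor_of_ne_bot hx hy).1 (hJab.subset hxy)
  obtain rfl := (ha.le_iff.1 hxa).resolve_left hx
  obtain rfl := (hb.le_iff.1 hyb).resolve_left hy
  exact hJab.not_subset (hJ.pureTensor_subset_iff.2 hxy)

/-- The atoms of `A ⊗ B` (ordered by inclusion, with least element `∇`) are
exactly the pure tensors `a ⊗ b` with `a` an atom of `A` and `b` an atom of `B`. -/
theorem tensor_atoms {A B : Type*} [SemilatticeSup A] [OrderBot A]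
    [SemilatticeSup B] [OrderBot B] (I : Set (A × B)) (hI : IsTensorElt I) :
    (I ≠ nabla A B ∧ ∀ J : Set (A × B), IsTensorElt J → J ⊂ I → J = nabla A B) ↔
      ∃ a : A, ∃ b : B, IsAtom a ∧ IsAtom b ∧ I = pureTensor a b := by
  refine ⟨fun ⟨hne, hmin⟩ => hI.isBiIdeal.exists_eq_pureTensor_of_minimal hne hmin, ?_⟩
  rintro ⟨a, b, ha, hb, rfl⟩
  exact ⟨fun h => (pureTensor_eq_nabla_iff.1 h).elim ha.1 hb.1,
    fun J hJ hJab => hJ.isBiIdeal.eq_nabla_of_ssubset_pureTensor ha hb hJab⟩
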